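/- If o, p, q, r is a ⋎-tetrad, its diagonals a = (o ⊓ p) ∩ (q ⊓ r), b = (o ⊓ q) ∩ (r ⊓ p), c = (o ⊓ r) ∩ (p ⊓ q) are well-defined copunctal lines, distinct from each other and from o, p, q, r. -/
import Mathlib


/-- A 'linear' framework for projective 3-space: a set of lines with an
incidence relation, together with the data of the two incidence-equivalence
classes `SigY`, `SigM` on `Σ(a,b)` and the derived points `pt` and planes `pl`. -/
structure LineGeom where
  L : Type
  dag : L → L → Prop
  dag_refl : ∀ l, dag l l
  dag_symm : ∀ {a b}, dag a b → dag b a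
  SigY : L → L → Set L
  SigM : L → L → Set L
  pt : L → L → Set L
  pl : L → L → Set L

namespace LineGeom

variable (G : LineGeom)

/-- `S†` : the lines incident to every line of `S`. -/
def perp (S : Set G.L) : Set G.L := {x | ∀ s ∈ S, G.dag x s}

/-- `Σ(a,b) = [a b] \ [a b]†`. -/
def Sig (a b : G.L) : Set G.L := G.perp {a, b} \ G.perp (G.perp {a, b})

/-- AXIOMS [1]-[4] together with the defining properties of the two classes
`Σ_⋎(a,b)`, `Σ_⊓(a,b)` and of the point `a ⋎ b` and plane `a ⊓ b`. -/
structure Axioms : Prop where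
  ax1 : ∀ l : G.L, ∃ x y z, x ∈ G.perp {l} ∧ y ∈ G.perp {l} ∧ z ∈ G.perp {l} ∧
      ¬ G.dag x y ∧ ¬ G.dag y z ∧ ¬ G.dag x z
  ax21 : ∀ a b : G.L, a ≠ b → G.dag a b →
      ∃ x ∈ G.perp {a, b}, ∃ y ∈ G.perp {a, b}, ¬ G.dag x y
  ax22 : ∀ a b : G.L, a ≠ b → G.dag a b → ∀ c ∈ G.Sig a b,
      ∀ x ∈ G.perp {a, b, c}, ∀ y ∈ G.perp {a, b, c}, G.dag x y
  ax23 : ∀ a b : G.L, a ≠ b → G.dag a b →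
      ∀ x ∈ G.perp {a, b}, ∀ y ∈ G.perp {a, b}, ¬ G.dag x y →
      G.perp {a, b} = G.perp {a, b, x} ∪ G.perp {a, b, y}
  ax3 : ∀ a b : G.L, a ≠ b → G.dag a b → ∀ c ∈ G.Sig a b,
      ∃ p q : G.L, p ≠ q ∧ G.dag p q ∧ ∃ r ∈ G.Sig p q,
        G.perp {a, b, c} ∩ G.perp {p, q, r} = ∅
  sig_union : ∀ a b : G.L, a ≠ b → G.dag a b →
      G.SigY a b ∪ G.SigM a b = G.Sig a b
  sig_disjoint : ∀ a b : G.L, a ≠ b → G.dag a b →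
      G.SigY a b ∩ G.SigM a b = ∅
  sigY_nonempty : ∀ a b : G.L, a ≠ b → G.dag a b → (G.SigY a b).Nonempty
  sigM_nonempty : ∀ a b : G.L, a ≠ b → G.dag a b → (G.SigM a b).Nonempty
  sig_class : ∀ a b : G.L, a ≠ b → G.dag a b → ∀ x ∈ G.Sig a b, ∀ y ∈ G.Sig a b,
      (((x ∈ G.SigY a b ∧ y ∈ G.SigY a b) ∨ (x ∈ G.SigM a b ∧ y ∈ G.SigM a b))
        ↔ G.dag x y)
  sigY_symm : ∀ a b : G.L, G.SigY a b = G.SigY b a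
  sigM_symm : ∀ a b : G.L, G.SigM a b = G.SigM b a
  pt_spec : ∀ a b : G.L, a ≠ b → G.dag a b → ∀ c ∈ G.SigY a b,
      G.pt a b = G.perp {a, b, c}
  pl_spec : ∀ a b : G.L, a ≠ b → G.dag a b → ∀ c ∈ G.SigM a b,
      G.pl a b = G.perp {a, b, c}
  ax4 : ∀ a b p q : G.L, a ≠ b → G.dag a b → p ≠ q → G.dag p q →
      (G.pt a b ∩ G.pt p q).Nonempty ∧ (G.pl a b ∩ G.pl p q).Nonempty

/-- Three pairwise-incident distinct lines forming a triad. -/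
def Triad (a b c : G.L) : Prop :=
  a ≠ b ∧ b ≠ c ∧ a ≠ c ∧ G.dag a b ∧ G.dag b c ∧ G.dag a c ∧
  a ∈ G.Sig b c ∧ b ∈ G.Sig c a ∧ c ∈ G.Sig a b

/-- A `⊓`-triad. -/
def MTriad (a b c : G.L) : Prop :=
  a ≠ b ∧ b ≠ c ∧ a ≠ c ∧ G.dag a b ∧ G.dag b c ∧ G.dag a c ∧
  a ∈ G.SigM b c ∧ b ∈ G.SigM c a ∧ c ∈ G.SigM a b

/-- A `⋎`-triad. -/
def YTriad (a b c : G.L) : Prop :=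
  a ≠ b ∧ b ≠ c ∧ a ≠ c ∧ G.dag a b ∧ G.dag b c ∧ G.dag a c ∧
  a ∈ G.SigY b c ∧ b ∈ G.SigY c a ∧ c ∈ G.SigY a b

/-- A `⊓`-tetrad: each of the four included triples is a `⊓`-triad. -/
def MTetrad (o p q r : G.L) : Prop :=
  G.MTriad p q r ∧ G.MTriad o q r ∧ G.MTriad o r p ∧ G.MTriad o p q

/-- A `⋎`-tetrad. -/
def YTetrad (o p q r : G.L) : Prop :=
  G.YTriad p q r ∧ G.YTriad o q r ∧ G.YTriad o r p ∧ G.YTriad o p q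

/-- A point: a set of lines of the form `x ⋎ y`. -/
def IsPoint (X : Set G.L) : Prop := ∃ x y : G.L, x ≠ y ∧ G.dag x y ∧ X = G.pt x y

/-- A plane: a set of lines of the form `x ⊓ y`. -/
def IsPlane (X : Set G.L) : Prop := ∃ x y : G.L, x ≠ y ∧ G.dag x y ∧ X = G.pl x y

end LineGeom

open LineGeom

namespace LineGeom

/-- The dual geometry obtained by swapping the two incidence classes. -/
@[reducible] def swap (G : LineGeom) : LineGeom where
  L := G.L
  dag := G.dag
  dag_refl := G.dag_refl
  dag_symm := G.dag_symm
  SigY := G.SigM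
  SigM := G.SigY
  pt := G.pl
  pl := G.pt

variable {G : LineGeom}

theorem Axioms.swap (hG : G.Axioms) : G.swap.Axioms where
  ax1 := hG.ax1
  ax21 := hG.ax21
  ax22 := hG.ax22
  ax23 := hG.ax23
  ax3 := hG.ax3
  sig_union := fun a b h1 h2 => (Set.union_comm _ _).trans (hG.sig_union a b h1 h2)
  sig_disjoint := fun a b h1 h2 => (Set.inter_comm _ _).trans (hG.sig_disjoint a b h1 h2)
  sigY_nonempty := hG.sigM_nonempty
  sigM_nonempty := hG.sigY_nonempty
  sig_class := fun a b h1 h2 x hx y hy => or_comm.trans (hG.sig_class a b h1 h2 x hx y hy)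
  sigY_symm := hG.sigM_symm
  sigM_symm := hG.sigY_symm
  pt_spec := hG.pl_spec
  pl_spec := hG.pt_spec
  ax4 := fun a b p q h1 h2 h3 h4 =>
    ⟨(hG.ax4 a b p q h1 h2 h3 h4).2, (hG.ax4 a b p q h1 h2 h3 h4).1⟩

theorem mem_perp2 {x a b : G.L} : x ∈ G.perp {a, b} ↔ G.dag x a ∧ G.dag x b := by
  simp [perp]

theorem mem_perp3 {x a b c : G.L} :
    x ∈ G.perp {a, b, c} ↔ G.dag x a ∧ G.dag x b ∧ G.dag x c := by
  simp [perp]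

section

variable (hG : G.Axioms) {a b : G.L} (nd : a ≠ b) (hd : G.dag a b)

include hG nd hd

theorem sigY_sub_sig : G.SigY a b ⊆ G.Sig a b := by
  rw [← hG.sig_union a b nd hd]; exact Set.subset_union_left

theorem sigM_sub_sig : G.SigM a b ⊆ G.Sig a b := by
  rw [← hG.sig_union a b nd hd]; exact Set.subset_union_right

theorem pt_pairwise {x y : G.L} (hx : x ∈ G.pt a b) (hy : y ∈ G.pt a b) : G.dag x y := by
  obtain ⟨u, hu⟩ := hG.sigY_nonempty a b nd hd
  rw [hG.pt_spec a b nd hd u hu] at hx hy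
  exact hG.ax22 a b nd hd u (sigY_sub_sig hG nd hd hu) x hx y hy

theorem mem_pt_left : a ∈ G.pt a b := by
  obtain ⟨u, hu⟩ := hG.sigY_nonempty a b nd hd
  have hup := (sigY_sub_sig hG nd hd hu).1
  rw [hG.pt_spec a b nd hd u hu]
  exact mem_perp3.mpr ⟨G.dag_refl a, hd, G.dag_symm (mem_perp2.mp hup).1⟩

theorem mem_pt_right : b ∈ G.pt a b := by
  obtain ⟨u, hu⟩ := hG.sigY_nonempty a b nd hd
  have hup := (sigY_sub_sig hG nd hd hu).1
  rw [hG.pt_spec a b nd hd u hu]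
  exact mem_perp3.mpr ⟨G.dag_symm hd, G.dag_refl b, G.dag_symm (mem_perp2.mp hup).2⟩

theorem pt_sub_perp : G.pt a b ⊆ G.perp {a, b} := by
  obtain ⟨u, hu⟩ := hG.sigY_nonempty a b nd hd
  rw [hG.pt_spec a b nd hd u hu]
  intro z hz
  exact mem_perp2.mpr ⟨(mem_perp3.mp hz).1, (mem_perp3.mp hz).2.1⟩

theorem sigY_mem_pt {z : G.L} (hz : z ∈ G.SigY a b) : z ∈ G.pt a b := by
  have hzp := (sigY_sub_sig hG nd hd hz).1
  rw [hG.pt_spec a b nd hd z hz]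
  exact mem_perp3.mpr ⟨(mem_perp2.mp hzp).1, (mem_perp2.mp hzp).2, G.dag_refl z⟩

theorem mem_pt_of_not_sig {z : G.L} (hz : z ∈ G.perp {a, b}) (hns : z ∉ G.Sig a b) :
    z ∈ G.pt a b := by
  have hpp : z ∈ G.perp (G.perp {a, b}) := by
    by_contra h; exact hns ⟨hz, h⟩
  obtain ⟨u, hu⟩ := hG.sigY_nonempty a b nd hd
  rw [hG.pt_spec a b nd hd u hu]
  exact mem_perp3.mpr ⟨(mem_perp2.mp hz).1, (mem_perp2.mp hz).2,
    hpp u (sigY_sub_sig hG nd hd hu).1⟩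

theorem sigY_of_mem_pt {z : G.L} (hsig : z ∈ G.Sig a b) (hz : z ∈ G.pt a b) :
    z ∈ G.SigY a b := by
  obtain ⟨u, hu⟩ := hG.sigY_nonempty a b nd hd
  rw [hG.pt_spec a b nd hd u hu] at hz
  have hdzu : G.dag z u := (mem_perp3.mp hz).2.2
  rcases (hG.sig_class a b nd hd z hsig u (sigY_sub_sig hG nd hd hu)).mpr hdzu with
    ⟨h1, _⟩ | ⟨_, h2⟩
  · exact h1
  · exfalso
    have hmem : u ∈ G.SigY a b ∩ G.SigM a b := ⟨hu, h2⟩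
    rw [hG.sig_disjoint a b nd hd] at hmem
    simpa using hmem

theorem sigM_not_mem_pt {z : G.L} (hz : z ∈ G.SigM a b) : z ∉ G.pt a b := by
  intro h
  have hY := sigY_of_mem_pt hG nd hd (sigM_sub_sig hG nd hd hz) h
  have hmem : z ∈ G.SigY a b ∩ G.SigM a b := ⟨hY, hz⟩
  rw [hG.sig_disjoint a b nd hd] at hmem
  simpa using hmem

theorem not_pt_subset_pl {x y : G.L} (ndxy : x ≠ y) (hdxy : G.dag x y) :
    ¬ G.pt a b ⊆ G.pl x y := by
  intro hss
  obtain ⟨m, hm⟩ := hG.sigM_nonempty x y ndxy hdxy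
  obtain ⟨p', q', hpq, hdpq, r', hr, hdisj⟩ :=
    hG.ax3 x y ndxy hdxy m (sigM_sub_sig hG ndxy hdxy hm)
  rw [← hG.pl_spec x y ndxy hdxy m hm] at hdisj
  have hr' : r' ∈ G.SigY p' q' ∪ G.SigM p' q' := by
    rw [hG.sig_union p' q' hpq hdpq]; exact hr
  rcases hr' with hY | hM
  · rw [← hG.pt_spec p' q' hpq hdpq r' hY] at hdisj
    obtain ⟨w, hw⟩ := (hG.ax4 a b p' q' nd hd hpq hdpq).1
    have hmem : w ∈ G.pl x y ∩ G.pt p' q' := ⟨hss hw.1, hw.2⟩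
    rw [hdisj] at hmem
    simpa using hmem
  · rw [← hG.pl_spec p' q' hpq hdpq r' hM] at hdisj
    obtain ⟨w, hw⟩ := (hG.ax4 x y p' q' ndxy hdxy hpq hdpq).2
    rw [hdisj] at hw
    simpa using hw

theorem pt_subset {x y : G.L} (ndxy : x ≠ y) (hx : x ∈ G.pt a b) (hy : y ∈ G.pt a b) :
    G.pt a b ⊆ G.pt x y := by
  have hdxy : G.dag x y := pt_pairwise hG nd hd hx hy
  obtain ⟨z, hz, hznpl⟩ := Set.not_subset.mp (not_pt_subset_pl hG nd hd ndxy hdxy)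
  have hzperp : z ∈ G.perp {x, y} :=
    mem_perp2.mpr ⟨pt_pairwise hG nd hd hz hx, pt_pairwise hG nd hd hz hy⟩
  have hzsig : z ∈ G.Sig x y := by
    by_contra h
    exact hznpl (mem_pt_of_not_sig (G := G.swap) hG.swap ndxy hdxy hzperp h)
  have hzYM : z ∈ G.SigY x y ∪ G.SigM x y := by
    rw [hG.sig_union x y ndxy hdxy]; exact hzsig
  have hzY : z ∈ G.SigY x y := by
    rcases hzYM with hY | hM
    · exact hY
    · exact absurd (sigY_mem_pt (G := G.swap) hG.swap ndxy hdxy hM) hznpl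
  rw [hG.pt_spec x y ndxy hdxy z hzY]
  intro w hw
  exact mem_perp3.mpr ⟨pt_pairwise hG nd hd hw hx, pt_pairwise hG nd hd hw hy,
    pt_pairwise hG nd hd hw hz⟩

theorem pt_eq_pt {x y : G.L} (ndxy : x ≠ y) (hx : x ∈ G.pt a b) (hy : y ∈ G.pt a b) :
    G.pt a b = G.pt x y := by
  have hdxy : G.dag x y := pt_pairwise hG nd hd hx hy
  have h1 := pt_subset hG nd hd ndxy hx hy
  exact Set.Subset.antisymm h1
    (pt_subset hG ndxy hdxy nd (h1 (mem_pt_left hG nd hd)) (h1 (mem_pt_right hG nd hd)))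

/- Dual (plane) versions via `swap`. -/

theorem pl_pairwise {x y : G.L} (hx : x ∈ G.pl a b) (hy : y ∈ G.pl a b) : G.dag x y :=
  pt_pairwise (G := G.swap) hG.swap nd hd hx hy

theorem mem_pl_left : a ∈ G.pl a b := mem_pt_left (G := G.swap) hG.swap nd hd

theorem mem_pl_right : b ∈ G.pl a b := mem_pt_right (G := G.swap) hG.swap nd hd

theorem pl_sub_perp : G.pl a b ⊆ G.perp {a, b} := pt_sub_perp (G := G.swap) hG.swap nd hd

theorem sigM_mem_pl {z : G.L} (hz : z ∈ G.SigM a b) : z ∈ G.pl a b :=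
  sigY_mem_pt (G := G.swap) hG.swap nd hd hz

theorem sigY_not_mem_pl {z : G.L} (hz : z ∈ G.SigY a b) : z ∉ G.pl a b :=
  sigM_not_mem_pt (G := G.swap) hG.swap nd hd hz

theorem pl_eq_pl {x y : G.L} (ndxy : x ≠ y) (hx : x ∈ G.pl a b) (hy : y ∈ G.pl a b) :
    G.pl a b = G.pl x y :=
  pt_eq_pt (G := G.swap) hG.swap nd hd ndxy hx hy

theorem plane_inter_eq_singleton {c d : G.L} (ndcd : c ≠ d) (hdcd : G.dag c d)
    (hne : G.pl a b ≠ G.pl c d) :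
    ∃ e, e ∈ G.pl a b ∩ G.pl c d ∧ G.pl a b ∩ G.pl c d = {e} := by
  obtain ⟨e, he⟩ := (hG.ax4 a b c d nd hd ndcd hdcd).2
  refine ⟨e, he, ?_⟩
  ext z
  simp only [Set.mem_singleton_iff]
  constructor
  · intro hz
    by_contra hne'
    exact hne ((pl_eq_pl hG nd hd hne' hz.1 he.1).trans
      (pl_eq_pl hG ndcd hdcd hne' hz.2 he.2).symm)
  · rintro rfl; exact he

end

end LineGeom


/-- The diagonals of a `⋎`-tetrad are well-defined copunctal
lines, distinct from each other and from `o, p, q, r`. -/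
theorem stmt_7 (G : LineGeom) (hG : G.Axioms) (o p q r : G.L)
    (hT : G.YTetrad o p q r) :
    (G.pl o p ≠ G.pl q r ∧ G.pl o q ≠ G.pl r p ∧ G.pl o r ≠ G.pl p q) ∧
    ∃ a b c : G.L,
      G.pl o p ∩ G.pl q r = {a} ∧
      G.pl o q ∩ G.pl r p = {b} ∧
      G.pl o r ∩ G.pl p q = {c} ∧
      List.Pairwise (· ≠ ·) [o, p, q, r, a, b, c] ∧
      ∃ x y : G.L, x ≠ y ∧ G.dag x y ∧
        a ∈ G.pt x y ∧ b ∈ G.pt x y ∧ c ∈ G.pt x y := by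
  obtain ⟨⟨npq2, nqr2, npr, dpq2, dqr2, dpr, pYqr, qYrp, rYpq⟩,
    ⟨noq, nqr, nor, doq, dqr, dor, oYqr, qYro, rYoq⟩,
    ⟨nor2, nrp, nop2, dor2, drp, dop2, oYrp, rYpo, pYor⟩,
    ⟨nop, npq, noq2, dop, dpq, doq2, oYpq, pYqo, qYop⟩⟩ := hT
  have pYoq : p ∈ G.SigY o q := hG.sigY_symm q o ▸ pYqo
  have rYop : r ∈ G.SigY o p := hG.sigY_symm p o ▸ rYpo
  have qYor : q ∈ G.SigY o r := hG.sigY_symm r o ▸ qYro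
  -- non-memberships
  have onqr : o ∉ G.pl q r := sigY_not_mem_pl hG nqr dqr oYqr
  have onrp : o ∉ G.pl r p := sigY_not_mem_pl hG nrp drp oYrp
  have onpq : o ∉ G.pl p q := sigY_not_mem_pl hG npq dpq oYpq
  have pnqr : p ∉ G.pl q r := sigY_not_mem_pl hG nqr dqr pYqr
  have pnoq : p ∉ G.pl o q := sigY_not_mem_pl hG noq doq pYoq
  have pnor : p ∉ G.pl o r := sigY_not_mem_pl hG nor dor pYor
  have qnop : q ∉ G.pl o p := sigY_not_mem_pl hG nop dop qYop
  have qnrp : q ∉ G.pl r p := sigY_not_mem_pl hG nrp drp qYrp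
  have qnor : q ∉ G.pl o r := sigY_not_mem_pl hG nor dor qYor
  have rnop : r ∉ G.pl o p := sigY_not_mem_pl hG nop dop rYop
  have rnoq : r ∉ G.pl o q := sigY_not_mem_pl hG noq doq rYoq
  have rnpq : r ∉ G.pl p q := sigY_not_mem_pl hG npq dpq rYpq
  -- the three planes are pairwise distinct in the required sense
  have h1 : G.pl o p ≠ G.pl q r := by
    intro h; exact qnop (by rw [h]; exact mem_pl_left hG nqr dqr)
  have h2 : G.pl o q ≠ G.pl r p := by
    intro h; exact onrp (by rw [← h]; exact mem_pl_left hG noq doq)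
  have h3 : G.pl o r ≠ G.pl p q := by
    intro h; exact onpq (by rw [← h]; exact mem_pl_left hG nor dor)
  obtain ⟨A, hA, hAeq⟩ := plane_inter_eq_singleton hG nop dop nqr dqr h1
  obtain ⟨B, hB, hBeq⟩ := plane_inter_eq_singleton hG noq doq nrp drp h2
  obtain ⟨C, hC, hCeq⟩ := plane_inter_eq_singleton hG nor dor npq dpq h3
  -- distinctness from o, p, q, r
  have noA : o ≠ A := fun h => onqr (by rw [h]; exact hA.2)
  have noB : o ≠ B := fun h => onrp (by rw [h]; exact hB.2)
  have noC : o ≠ C := fun h => onpq (by rw [h]; exact hC.2)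
  have npA : p ≠ A := fun h => pnqr (by rw [h]; exact hA.2)
  have npB : p ≠ B := fun h => pnoq (by rw [h]; exact hB.1)
  have npC : p ≠ C := fun h => pnor (by rw [h]; exact hC.1)
  have nqA : q ≠ A := fun h => qnop (by rw [h]; exact hA.1)
  have nqB : q ≠ B := fun h => qnrp (by rw [h]; exact hB.2)
  have nqC : q ≠ C := fun h => qnor (by rw [h]; exact hC.1)
  have nrA : r ≠ A := fun h => rnop (by rw [h]; exact hA.1)
  have nrB : r ≠ B := fun h => rnoq (by rw [h]; exact hB.1)
  have nrC : r ≠ C := fun h => rnpq (by rw [h]; exact hC.2)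
  -- mutual distinctness of the diagonals
  have nAB : A ≠ B := by
    intro h
    have e1 := pl_eq_pl hG nop dop noA (mem_pl_left hG nop dop) hA.1
    have e2 := pl_eq_pl hG noq doq noA (mem_pl_left hG noq doq) (by rw [h]; exact hB.1)
    exact qnop (by rw [e1, ← e2]; exact mem_pl_right hG noq doq)
  have nAC : A ≠ C := by
    intro h
    have e1 := pl_eq_pl hG nop dop noA (mem_pl_left hG nop dop) hA.1
    have e2 := pl_eq_pl hG nor dor noA (mem_pl_left hG nor dor) (by rw [h]; exact hC.1)
    exact rnop (by rw [e1, ← e2]; exact mem_pl_right hG nor dor)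
  have nBC : B ≠ C := by
    intro h
    have e1 := pl_eq_pl hG noq doq noB (mem_pl_left hG noq doq) hB.1
    have e2 := pl_eq_pl hG nor dor noB (mem_pl_left hG nor dor) (by rw [h]; exact hC.1)
    exact rnoq (by rw [e1, ← e2]; exact mem_pl_right hG nor dor)
  -- copunctality at the point o ⋎ p
  have hAO : A ∈ G.pt o p := by
    by_contra hn
    have haperp : A ∈ G.perp {o, p} := pl_sub_perp hG nop dop hA.1
    have hasig : A ∈ G.Sig o p := by
      by_contra h
      exact hn (mem_pt_of_not_sig hG nop dop haperp h)
    have hYM : A ∈ G.SigY o p ∪ G.SigM o p := by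
      rw [hG.sig_union o p nop dop]; exact hasig
    rcases hYM with hY | hM
    · exact hn (sigY_mem_pt hG nop dop hY)
    · refine qnop ?_
      rw [hG.pl_spec o p nop dop A hM]
      exact mem_perp3.mpr ⟨G.dag_symm doq, G.dag_symm dpq,
        pl_pairwise hG nqr dqr (mem_pl_left hG nqr dqr) hA.2⟩
  have hBO : B ∈ G.pt o q := by
    by_contra hn
    have hbperp : B ∈ G.perp {o, q} := pl_sub_perp hG noq doq hB.1
    have hbsig : B ∈ G.Sig o q := by
      by_contra h
      exact hn (mem_pt_of_not_sig hG noq doq hbperp h)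
    have hYM : B ∈ G.SigY o q ∪ G.SigM o q := by
      rw [hG.sig_union o q noq doq]; exact hbsig
    rcases hYM with hY | hM
    · exact hn (sigY_mem_pt hG noq doq hY)
    · refine pnoq ?_
      rw [hG.pl_spec o q noq doq B hM]
      exact mem_perp3.mpr ⟨G.dag_symm dop, dpq,
        pl_pairwise hG nrp drp (mem_pl_right hG nrp drp) hB.2⟩
  have hCO : C ∈ G.pt o r := by
    by_contra hn
    have hcperp : C ∈ G.perp {o, r} := pl_sub_perp hG nor dor hC.1
    have hcsig : C ∈ G.Sig o r := by
      by_contra h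
      exact hn (mem_pt_of_not_sig hG nor dor hcperp h)
    have hYM : C ∈ G.SigY o r ∪ G.SigM o r := by
      rw [hG.sig_union o r nor dor]; exact hcsig
    rcases hYM with hY | hM
    · exact hn (sigY_mem_pt hG nor dor hY)
    · refine pnor ?_
      rw [hG.pl_spec o r nor dor C hM]
      exact mem_perp3.mpr ⟨G.dag_symm dop, dpr,
        pl_pairwise hG npq dpq (mem_pl_left hG npq dpq) hC.2⟩
  have qmemO : q ∈ G.pt o p := sigY_mem_pt hG nop dop qYop
  have rmemO : r ∈ G.pt o p := by
    rw [hG.pt_spec o p nop dop q qYop]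
    exact mem_perp3.mpr ⟨G.dag_symm dor, drp, G.dag_symm dqr⟩
  have eqOQ : G.pt o p = G.pt o q :=
    pt_eq_pt hG nop dop noq (mem_pt_left hG nop dop) qmemO
  have eqOR : G.pt o p = G.pt o r :=
    pt_eq_pt hG nop dop nor (mem_pt_left hG nop dop) rmemO
  refine ⟨⟨h1, h2, h3⟩, A, B, C, hAeq, hBeq, hCeq, ?_, o, p, nop, dop, hAO,
    (by rw [eqOQ]; exact hBO), (by rw [eqOR]; exact hCO)⟩
  constructor
  · intro x hx; fin_cases hx <;> assumption
  constructor
  · intro x hx; fin_cases hx <;> assumption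
  constructor
  · intro x hx; fin_cases hx <;> assumption
  constructor
  · intro x hx; fin_cases hx <;> assumption
  constructor
  · intro x hx; fin_cases hx <;> assumption
  constructor
  · intro x hx; fin_cases hx <;> assumption
  constructor
  · intro x hx; fin_cases hx <;> assumption
  exact List.Pairwise.nil
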